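/- (Theorem 2, convergence.) Let G be a finite simple graph on a nonempty finite vertex set V that is connected and non-bipartite, with deg(u) ≥ 1 for all u, let K be a positive real with deg(u) ≤ K for all u, and define P, Q, κ, and the coupled transition matrix T((u₁,u₂),(v₁,v₂)) = P(u₁,v₁)·Q(u₂,v₂)·(1 − κ(v₁,v₂)) + P(u₁,v₂)·Q(u₂,v₁)·κ(v₂,v₁) on V × V as in the coupled chain. Then the coupled Markov chain has the same limiting distribution as the pair of independent chains: for all states x, (v₁,v₂) ∈ V × V, the (x,(v₁,v₂)) entry of T^t converges to (1/|V|)·(deg(v₂)/Σ_{w∈V} deg(w)) as t → ∞. -/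

import Mathlib

/-!
The coupled matrix `T` is row-stochastic, and `μ ⊗ ν`, with `μ` uniform and `ν ∝ deg`, is
stationary for it: the lazy walk `P` is symmetric, hence preserves `μ`, the random walk `Q`
preserves `ν`, and `κ` is the Metropolis ratio making `μ a ν b κ a b` symmetric, so the swap
preserves `μ ⊗ ν` as well. A swapping step of `T` moves the two coordinates along a pair of crossed
edges, so two walks of the same even length `2m` give a positive entry of `T ^ (2m)`; since `G` is
connected and not bipartite there are walks of every large length between any two vertices, and
`T` is primitive. Doeblin's argument then gives convergence: if every entry of `T ^ N` is at least
`δ`, each application of `T ^ N` shrinks the spread of a column by the factor `1 - |V × V| δ`, and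
the stationary value always lies within that spread.
-/

open Filter Finset Matrix Topology

lemma Fintype.sum_mul_mem_Icc {ι R : Type*} [Fintype ι] [Semiring R] [PartialOrder R]
    [IsOrderedRing R] {p f : ι → R} {a b : R} (hp : ∀ i, 0 ≤ p i)
    (hf : ∀ i, f i ∈ Set.Icc a b) :
    ∑ i, p i * f i ∈ Set.Icc ((∑ i, p i) * a) ((∑ i, p i) * b) := by
  rw [sum_mul, sum_mul]
  exact ⟨sum_le_sum fun i _ => mul_le_mul_of_nonneg_left (hf i).1 (hp i),
    sum_le_sum fun i _ => mul_le_mul_of_nonneg_left (hf i).2 (hp i)⟩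

lemma mul_mem_stdSimplex_prod {ι ι' 𝕜 : Type*} [Fintype ι] [Fintype ι'] [CommSemiring 𝕜]
    [PartialOrder 𝕜] [IsOrderedRing 𝕜] {μ : ι → 𝕜} {ν : ι' → 𝕜}
    (hμ : μ ∈ stdSimplex 𝕜 ι) (hν : ν ∈ stdSimplex 𝕜 ι') :
    (fun x : ι × ι' => μ x.1 * ν x.2) ∈ stdSimplex 𝕜 (ι × ι') :=
  ⟨fun x => mul_nonneg (hμ.1 x.1) (hν.1 x.2), by
    rw [Fintype.sum_prod_type' (fun a b => μ a * ν b), ← sum_mul_sum, hμ.2, hν.2, one_mul]⟩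

namespace Matrix

variable {S R : Type*} [Fintype S] [DecidableEq S]

section Doeblin

variable [CommRing R] [PartialOrder R] [IsOrderedRing R]
  {A : Matrix S S R} {δ : R} {f : S → R} {a r : R}

lemma exists_forall_mulVec_mem_Icc (hA : A ∈ rowStochastic R S) (hδ : ∀ u w, δ ≤ A u w)
    (hf : ∀ w, f w ∈ Set.Icc a (a + r)) :
    ∃ b, ∀ u, (A *ᵥ f) u ∈ Set.Icc b (b + (1 - Fintype.card S * δ) * r) := by
  refine ⟨(1 - Fintype.card S * δ) * a + δ * ∑ w, f w, fun u => ?_⟩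
  have hsplit : (A *ᵥ f) u = ∑ w, (A u w - δ) * f w + δ * ∑ w, f w := by
    simp only [mulVec, dotProduct, sub_mul, sum_sub_distrib, mul_sum, sub_add_cancel]
  have hmass : ∑ w, (A u w - δ) = 1 - Fintype.card S * δ := by
    simp [sum_sub_distrib, sum_row_of_mem_rowStochastic hA]
  obtain ⟨hlow, hupp⟩ := Fintype.sum_mul_mem_Icc (fun w => sub_nonneg.2 (hδ u w)) hf
  rw [hmass, mul_add] at hupp
  rw [hmass] at hlow
  rw [hsplit, add_right_comm]
  exact ⟨by gcongr, by gcongr⟩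

lemma exists_forall_pow_mulVec_mem_Icc (hA : A ∈ rowStochastic R S) (hδ : ∀ u w, δ ≤ A u w)
    (hf : ∀ w, f w ∈ Set.Icc a (a + r)) (k : ℕ) :
    ∃ b, ∀ u, (A ^ k *ᵥ f) u ∈ Set.Icc b (b + (1 - Fintype.card S * δ) ^ k * r) := by
  induction k with
  | zero => exact ⟨a, by simpa using hf⟩
  | succ k ih =>
    obtain ⟨b, hb⟩ := ih
    obtain ⟨b', hb'⟩ := exists_forall_mulVec_mem_Icc hA hδ hb
    exact ⟨b', by simpa only [pow_succ', ← mulVec_mulVec, mul_assoc] using hb'⟩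

end Doeblin

lemma vecMul_pow_eq_self {R : Type*} [Semiring R] {T : Matrix S S R} {π : S → R}
    (hstat : π ᵥ* T = π) (t : ℕ) : π ᵥ* T ^ t = π := by
  induction t with
  | zero => simp
  | succ t ih => rw [pow_succ, ← vecMul_vecMul, ih, hstat]

lemma pow_succ_apply_pos [CommRing R] [PartialOrder R] [IsStrictOrderedRing R]
    {A : Matrix S S R} (hA : ∀ i j, 0 ≤ A i j) {n : ℕ} {x y z : S}
    (hxy : 0 < A x y) (hyz : 0 < (A ^ n) y z) : 0 < (A ^ (n + 1)) x z := by
  rw [pow_succ', mul_apply]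
  exact (mul_pos hxy hyz).trans_le <| single_le_sum (f := fun w => A x w * (A ^ n) w z)
    (fun w _ => mul_nonneg (hA x w) (pow_apply_nonneg hA n w z)) (mem_univ y)

variable {T : Matrix S S ℝ} {π : S → ℝ}

lemma abs_pow_apply_sub_le (hT : T ∈ rowStochastic ℝ S) (hπ : π ∈ stdSimplex ℝ S)
    (hstat : π ᵥ* T = π) {N : ℕ} {δ : ℝ} (hδ : ∀ u w, δ ≤ (T ^ N) u w) (t : ℕ) (x y : S) :
    |(T ^ t) x y - π y| ≤ (1 - Fintype.card S * δ) ^ (t / N) := by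
  set c := 1 - Fintype.card S * δ
  have hcol : ∀ w, (T ^ (t % N)) w y ∈ Set.Icc 0 (0 + 1) := fun w =>
    ⟨nonneg_of_mem_rowStochastic (pow_mem hT _),
      by simpa using le_one_of_mem_rowStochastic (pow_mem hT _)⟩
  obtain ⟨b, hb⟩ := exists_forall_pow_mulVec_mem_Icc (pow_mem hT N) hδ hcol (t / N)
  have hcolt : ∀ u, (T ^ t) u y ∈ Set.Icc b (b + c ^ (t / N)) := fun u => by
    have ht : T ^ t = (T ^ N) ^ (t / N) * T ^ (t % N) := by
      rw [← pow_mul, ← pow_add, Nat.div_add_mod]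
    rw [ht, ← mul_one (c ^ (t / N))]
    exact hb u
  have hπy : π y = ∑ u, π u * (T ^ t) u y := by
    conv_lhs => rw [← vecMul_pow_eq_self hstat t]
    rfl
  have hπb := Fintype.sum_mul_mem_Icc hπ.1 hcolt
  rw [hπ.2, one_mul, one_mul, ← hπy] at hπb
  rw [abs_sub_le_iff]
  constructor <;> linarith [(hcolt x).1, (hcolt x).2, hπb.1, hπb.2]

theorem IsPrimitive.tendsto_pow_apply (hprim : T.IsPrimitive) (hT : T ∈ rowStochastic ℝ S)
    (hπ : π ∈ stdSimplex ℝ S) (hstat : π ᵥ* T = π) (x y : S) :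
    Tendsto (fun t => (T ^ t) x y) atTop (𝓝 (π y)) := by
  have : Nonempty S := ⟨x⟩
  obtain ⟨N, hN, hpos⟩ := hprim.exists_pos_pow
  obtain ⟨⟨i, j⟩, -, hmin⟩ :=
    exists_min_image univ (fun p : S × S => (T ^ N) p.1 p.2) univ_nonempty
  have hδ : ∀ u w, (T ^ N) i j ≤ (T ^ N) u w := fun u w => hmin (u, w) (mem_univ _)
  have hc0 : 0 ≤ 1 - Fintype.card S * (T ^ N) i j := by
    have := sum_le_sum fun w (_ : w ∈ univ) => hδ x w
    simp only [sum_row_of_mem_rowStochastic (pow_mem hT N), sum_const, card_univ,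
      nsmul_eq_mul] at this
    linarith
  have hc1 : 1 - Fintype.card S * (T ^ N) i j < 1 := by
    have : 0 < (Fintype.card S : ℝ) * (T ^ N) i j :=
      mul_pos (by exact_mod_cast Fintype.card_pos) (hpos i j)
    linarith
  refine tendsto_iff_dist_tendsto_zero.2 <| squeeze_zero (fun _ => dist_nonneg)
    (fun t => abs_pow_apply_sub_le hT hπ hstat hδ t x y) ?_
  exact (tendsto_pow_atTop_nhds_zero_of_lt_one hc0 hc1).comp (Nat.tendsto_div_const_atTop hN.ne')

end Matrix

section Coupling

variable {V : Type*} {P Q : Matrix V V ℝ} {κ : V → V → ℝ}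

/-- The two coordinates propose independent moves by `P` and `Q`, and a proposal `(a, b)` is then
swapped to `(b, a)` with probability `κ a b`. -/
def coupledMatrix (P Q : Matrix V V ℝ) (κ : V → V → ℝ) : Matrix (V × V) (V × V) ℝ :=
  of fun x y => P x.1 y.1 * Q x.2 y.2 * (1 - κ y.1 y.2) + P x.1 y.2 * Q x.2 y.1 * κ y.2 y.1

lemma coupledMatrix_mem_rowStochastic [Fintype V] [DecidableEq V] (hP : P ∈ rowStochastic ℝ V)
    (hQ : Q ∈ rowStochastic ℝ V) (hκ : ∀ a b, κ a b ∈ Set.Icc 0 1) :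
    coupledMatrix P Q κ ∈ rowStochastic ℝ (V × V) := by
  refine mem_rowStochastic_iff_sum.2 ⟨fun x y => ?_, fun x => ?_⟩
  · have hPQ : ∀ a b, 0 ≤ P x.1 a * Q x.2 b := fun _ _ =>
      mul_nonneg (nonneg_of_mem_rowStochastic hP) (nonneg_of_mem_rowStochastic hQ)
    exact add_nonneg (mul_nonneg (hPQ _ _) (sub_nonneg.2 (hκ _ _).2))
      (mul_nonneg (hPQ _ _) (hκ _ _).1)
  · have hswap : ∑ y : V × V, P x.1 y.2 * Q x.2 y.1 * κ y.2 y.1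
        = ∑ y : V × V, P x.1 y.1 * Q x.2 y.2 * κ y.1 y.2 :=
      (Equiv.prodComm V V).sum_comp fun y => P x.1 y.1 * Q x.2 y.2 * κ y.1 y.2
    calc ∑ y, coupledMatrix P Q κ x y
        = ∑ y : V × V, P x.1 y.1 * Q x.2 y.2 * (1 - κ y.1 y.2)
          + ∑ y : V × V, P x.1 y.2 * Q x.2 y.1 * κ y.2 y.1 := sum_add_distrib
      _ = ∑ y : V × V, P x.1 y.1 * Q x.2 y.2 := by
          rw [hswap, ← sum_add_distrib]
          congr! 1 with y
          ring
      _ = 1 := by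
          rw [Fintype.sum_prod_type' (fun a b => P x.1 a * Q x.2 b), ← sum_mul_sum,
            sum_row_of_mem_rowStochastic hP, sum_row_of_mem_rowStochastic hQ, one_mul]

lemma vecMul_coupledMatrix [Fintype V] {μ ν : V → ℝ} (hμ : μ ᵥ* P = μ) (hν : ν ᵥ* Q = ν)
    (hbal : ∀ a b, μ a * ν b * κ a b = μ b * ν a * κ b a) :
    (fun x : V × V => μ x.1 * ν x.2) ᵥ* coupledMatrix P Q κ = fun x => μ x.1 * ν x.2 := by
  ext ⟨v₁, v₂⟩
  have hprod : ∀ a b, ∑ x : V × V, μ x.1 * ν x.2 * (P x.1 a * Q x.2 b) = μ a * ν b := by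
    intro a b
    rw [Fintype.sum_prod_type' (fun u₁ u₂ => μ u₁ * ν u₂ * (P u₁ a * Q u₂ b))]
    conv_rhs => rw [← hμ, ← hν]
    simp only [vecMul, dotProduct, sum_mul_sum]
    congr! 2 with u₁ _ u₂
    ring
  calc ∑ x : V × V, μ x.1 * ν x.2 * coupledMatrix P Q κ x (v₁, v₂)
      = (∑ x : V × V, μ x.1 * ν x.2 * (P x.1 v₁ * Q x.2 v₂)) * (1 - κ v₁ v₂)
        + (∑ x : V × V, μ x.1 * ν x.2 * (P x.1 v₂ * Q x.2 v₁)) * κ v₂ v₁ := by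
        simp only [coupledMatrix, of_apply, sum_mul, ← sum_add_distrib]
        congr! 1 with x
        ring
    _ = μ v₁ * ν v₂ := by
        rw [hprod, hprod]
        linear_combination hbal v₂ v₁

lemma coupledMatrix_pos_of_swap (hP : ∀ i j, 0 ≤ P i j) (hQ : ∀ i j, 0 ≤ Q i j)
    (hκ : ∀ a b, κ a b ≤ 1) {x y : V × V} (hPxy : 0 < P x.1 y.2) (hQxy : 0 < Q x.2 y.1)
    (hκy : 0 < κ y.2 y.1) : 0 < coupledMatrix P Q κ x y := by
  have hstay : 0 ≤ P x.1 y.1 * Q x.2 y.2 * (1 - κ y.1 y.2) :=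
    mul_nonneg (mul_nonneg (hP _ _) (hQ _ _)) (sub_nonneg.2 (hκ _ _))
  exact add_pos_of_nonneg_of_pos hstay (mul_pos (mul_pos hPxy hQxy) hκy)

end Coupling

namespace SimpleGraph

section Walks

variable {V : Type*} {G : SimpleGraph V}

lemma Adj.exists_loop_length_eq_two_mul {u w : V} (h : G.Adj u w) (k : ℕ) :
    ∃ p : G.Walk u u, p.length = 2 * k := by
  induction k with
  | zero => exact ⟨.nil, rfl⟩
  | succ k ih =>
    obtain ⟨p, hp⟩ := ih
    exact ⟨.cons h (.cons h.symm p), by simp only [Walk.length_cons, hp]; ring⟩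

lemma Walk.exists_loop_length_eq_of_odd {z : V} (c : G.Walk z z) (hc : Odd c.length) {m : ℕ}
    (hm : c.length ≤ m) : ∃ l : G.Walk z z, l.length = m := by
  obtain ⟨w, hzw⟩ : ∃ w, G.Adj z w := by
    cases c with
    | nil => simp at hc
    | cons h _ => exact ⟨_, h⟩
  rcases Nat.even_or_odd m with ⟨k, hk⟩ | hodd
  · obtain ⟨l, hl⟩ := hzw.exists_loop_length_eq_two_mul k
    exact ⟨l, by omega⟩
  · obtain ⟨k, hk⟩ : Even (m - c.length) := Nat.Odd.sub_odd hodd hc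
    obtain ⟨l, hl⟩ := hzw.exists_loop_length_eq_two_mul k
    exact ⟨c.append l, by rw [Walk.length_append]; omega⟩

theorem Connected.eventually_exists_walk_length_eq [Finite V] (hconn : G.Connected)
    (hnb : ¬G.Colorable 2) : ∀ᶠ n in atTop, ∀ u v : V, ∃ p : G.Walk u v, p.length = n := by
  obtain ⟨z, c, hc⟩ : ∃ z, ∃ c : G.Walk z z, Odd c.length := by
    simpa [two_colorable_iff_forall_loop_even] using hnb
  have : Nonempty V := hconn.nonempty
  have hdiam : G.ediam ≠ ⊤ := connected_iff_ediam_ne_top.1 hconn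
  refine eventually_atTop.2 ⟨2 * G.diam + c.length, fun n hn u v => ?_⟩
  obtain ⟨pu, hpu⟩ := hconn.exists_walk_length_eq_dist u z
  obtain ⟨pv, hpv⟩ := hconn.exists_walk_length_eq_dist z v
  have hu : G.dist u z ≤ G.diam := dist_le_diam hdiam
  have hv : G.dist z v ≤ G.diam := dist_le_diam hdiam
  obtain ⟨l, hl⟩ := c.exists_loop_length_eq_of_odd hc
    (m := n - G.dist u z - G.dist z v) (by omega)
  exact ⟨pu.append (l.append pv), by simp only [Walk.length_append]; omega⟩

variable [Fintype V] [DecidableEq V]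

/-- Each step of `T` crosses over, so the endpoint pair is swapped once per step. -/
theorem pow_apply_swap_iterate_pos {R : Type*} [CommRing R] [PartialOrder R]
    [IsStrictOrderedRing R] {T : Matrix (V × V) (V × V) R} (hT : ∀ x y, 0 ≤ T x y)
    (hstep : ∀ {u₁ u₂ w₁ w₂}, G.Adj u₁ w₂ → G.Adj u₂ w₁ → 0 < T (u₁, u₂) (w₁, w₂))
    (n : ℕ) {u₁ u₂ w₁ w₂ : V} (p : G.Walk u₁ w₁) (q : G.Walk u₂ w₂)
    (hp : p.length = n) (hq : q.length = n) :
    0 < (T ^ n) (u₁, u₂) (Prod.swap^[n] (w₁, w₂)) := by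
  induction n generalizing u₁ u₂ w₁ w₂ with
  | zero =>
    obtain rfl := p.eq_of_length_eq_zero hp
    obtain rfl := q.eq_of_length_eq_zero hq
    simp
  | succ n ih =>
    cases p with
    | nil => simp at hp
    | cons h p =>
      cases q with
      | nil => simp at hq
      | cons k q =>
        simp only [Walk.length_cons, add_left_inj] at hp hq
        rw [Function.iterate_succ_apply]
        exact pow_succ_apply_pos hT (hstep h k) (ih q p hq hp)

theorem Connected.isPrimitive_coupledMatrix (hconn : G.Connected) (hnb : ¬G.Colorable 2)
    {P Q : Matrix V V ℝ} {κ : V → V → ℝ} (hP : P ∈ rowStochastic ℝ V)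
    (hQ : Q ∈ rowStochastic ℝ V) (hκ : ∀ a b, κ a b ∈ Set.Icc 0 1)
    (hPG : ∀ {u v}, G.Adj u v → 0 < P u v) (hQG : ∀ {u v}, G.Adj u v → 0 < Q u v)
    (hκpos : ∀ a b, 0 < κ a b) : (coupledMatrix P Q κ).IsPrimitive := by
  have hT := coupledMatrix_mem_rowStochastic hP hQ hκ
  obtain ⟨n, hn⟩ := eventually_atTop.1 (hconn.eventually_exists_walk_length_eq hnb)
  refine ⟨fun _ _ => nonneg_of_mem_rowStochastic hT, 2 * (n + 1), by omega,
    fun ⟨u₁, u₂⟩ ⟨w₁, w₂⟩ => ?_⟩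
  obtain ⟨p, hp⟩ := hn (2 * (n + 1)) (by omega) u₁ w₁
  obtain ⟨q, hq⟩ := hn (2 * (n + 1)) (by omega) u₂ w₂
  have hswap : Function.Involutive (@Prod.swap V V) := Prod.swap_swap
  simpa [hswap.iterate_two_mul] using pow_apply_swap_iterate_pos
    (fun _ _ => nonneg_of_mem_rowStochastic hT)
    (fun h k => coupledMatrix_pos_of_swap (fun _ _ => nonneg_of_mem_rowStochastic hP)
      (fun _ _ => nonneg_of_mem_rowStochastic hQ) (fun a b => (hκ a b).2) (hPG h) (hQG k)
      (hκpos _ _)) _ p q hp hq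

end Walks

variable {V : Type*} [Fintype V] (G : SimpleGraph V) [DecidableRel G.Adj]

lemma sum_ite_adj {R : Type*} [NonAssocSemiring R] (u : V) (a : R) :
    ∑ v, (if G.Adj u v then a else 0) = G.degree u * a := by
  rw [← sum_filter, ← neighborFinset_eq_filter, sum_const, card_neighborFinset_eq_degree,
    nsmul_eq_mul]

noncomputable def lazyWalkMatrix [DecidableEq V] (K : ℝ) : Matrix V V ℝ :=
  of fun u v => if G.Adj u v then 1 / K else if u = v then 1 - G.degree u / K else 0

noncomputable def randomWalkMatrix : Matrix V V ℝ :=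
  of fun u v => if G.Adj u v then 1 / G.degree u else 0

noncomputable def swapProbability (a b : V) : ℝ :=
  min 1 (G.degree a / G.degree b)

section LazyWalk

variable [DecidableEq V] {K : ℝ}

lemma sum_lazyWalkMatrix_apply (u : V) : ∑ v, G.lazyWalkMatrix K u v = 1 := by
  have hsplit : ∀ v, G.lazyWalkMatrix K u v
      = (if G.Adj u v then 1 / K else 0) + (if u = v then 1 - G.degree u / K else 0) := by
    intro v
    by_cases h : G.Adj u v
    · simp [lazyWalkMatrix, h, G.ne_of_adj h]
    · simp [lazyWalkMatrix, h]
  simp only [hsplit, sum_add_distrib, sum_ite_adj, sum_ite_eq, mem_univ, if_true]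
  ring

lemma lazyWalkMatrix_mem_rowStochastic (hK : 0 < K) (hdegK : ∀ u, (G.degree u : ℝ) ≤ K) :
    G.lazyWalkMatrix K ∈ rowStochastic ℝ V := by
  refine mem_rowStochastic_iff_sum.2 ⟨fun u v => ?_, G.sum_lazyWalkMatrix_apply⟩
  simp only [lazyWalkMatrix, of_apply]
  split_ifs
  · positivity
  · exact sub_nonneg.2 ((div_le_one hK).2 (hdegK u))
  · exact le_rfl

lemma lazyWalkMatrix_apply_comm (u v : V) :
    G.lazyWalkMatrix K u v = G.lazyWalkMatrix K v u := by
  by_cases h : u = v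
  · rw [h]
  · simp [lazyWalkMatrix, G.adj_comm, h, Ne.symm h]

lemma vecMul_lazyWalkMatrix_const (c : ℝ) :
    (fun _ => c) ᵥ* G.lazyWalkMatrix K = fun _ => c := by
  ext v
  simp only [vecMul, dotProduct, ← mul_sum, G.lazyWalkMatrix_apply_comm _ v,
    sum_lazyWalkMatrix_apply, mul_one]

lemma lazyWalkMatrix_pos (hK : 0 < K) {u v : V} (h : G.Adj u v) :
    0 < G.lazyWalkMatrix K u v := by
  simpa [lazyWalkMatrix, h] using hK

end LazyWalk

lemma randomWalkMatrix_mem_rowStochastic [DecidableEq V] (hdeg : ∀ u, 0 < G.degree u) :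
    G.randomWalkMatrix ∈ rowStochastic ℝ V := by
  refine mem_rowStochastic_iff_sum.2 ⟨fun u v => ?_, fun u => ?_⟩
  · simp only [randomWalkMatrix, of_apply]
    split_ifs <;> positivity
  · simp only [randomWalkMatrix, of_apply, sum_ite_adj]
    exact mul_one_div_cancel (by exact_mod_cast (hdeg u).ne')

lemma vecMul_randomWalkMatrix (c : ℝ) :
    (fun v => (G.degree v : ℝ) / c) ᵥ* G.randomWalkMatrix = fun v => G.degree v / c := by
  ext v
  have hterm : ∀ u, (G.degree u : ℝ) / c * G.randomWalkMatrix u v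
      = if G.Adj v u then 1 / c else 0 := by
    intro u
    by_cases h : G.Adj u v
    · have : (G.degree u : ℝ) ≠ 0 := by
        exact_mod_cast ((G.degree_pos_iff_exists_adj u).2 ⟨v, h⟩).ne'
      simp [randomWalkMatrix, h, h.symm]
      field_simp
    · have h' : ¬G.Adj v u := fun h' => h h'.symm
      simp [randomWalkMatrix, h, h']
  simp only [vecMul, dotProduct, hterm, sum_ite_adj]
  ring

lemma randomWalkMatrix_pos {u v : V} (h : G.Adj u v) : 0 < G.randomWalkMatrix u v := by
  simpa [randomWalkMatrix, h] using (G.degree_pos_iff_exists_adj u).2 ⟨v, h⟩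

lemma swapProbability_mem_Icc (a b : V) : G.swapProbability a b ∈ Set.Icc 0 1 :=
  ⟨le_min zero_le_one (by positivity), min_le_left _ _⟩

lemma swapProbability_pos {a b : V} (ha : 0 < G.degree a) (hb : 0 < G.degree b) :
    0 < G.swapProbability a b :=
  lt_min one_pos (by positivity)

lemma degree_mul_swapProbability_comm {a b : V} (ha : 0 < G.degree a) (hb : 0 < G.degree b) :
    (G.degree b : ℝ) * G.swapProbability a b = G.degree a * G.swapProbability b a := by
  have ha' : (G.degree a : ℝ) ≠ 0 := by positivity
  have hb' : (G.degree b : ℝ) ≠ 0 := by positivity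
  simp only [swapProbability, mul_min_of_nonneg _ _ (Nat.cast_nonneg _), mul_one,
    mul_div_cancel₀ _ hb', mul_div_cancel₀ _ ha', min_comm]

lemma vecMul_coupledMatrix_const_mul_degree [DecidableEq V] {K : ℝ}
    (hdeg : ∀ u, 0 < G.degree u) (c d : ℝ) :
    (fun x : V × V => c * (G.degree x.2 / d)) ᵥ*
        coupledMatrix (G.lazyWalkMatrix K) G.randomWalkMatrix G.swapProbability =
      fun x => c * (G.degree x.2 / d) :=
  vecMul_coupledMatrix (G.vecMul_lazyWalkMatrix_const c) (G.vecMul_randomWalkMatrix d)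
    fun a b => by
      linear_combination (c / d) * G.degree_mul_swapProbability_comm (hdeg a) (hdeg b)

end SimpleGraph

theorem coupled_chain_limit_general
    {V : Type*} [Fintype V] [DecidableEq V]
    (G : SimpleGraph V) [DecidableRel G.Adj]
    (hconn : G.Connected) (hnb : ¬ G.Colorable 2)
    (hdeg : ∀ u : V, 1 ≤ G.degree u)
    (K : ℝ) (hK : 0 < K) (hdegK : ∀ u : V, (G.degree u : ℝ) ≤ K)
    (P : V → V → ℝ)
    (hP : ∀ u v : V, P u v =
      if G.Adj u v then 1 / K
      else if u = v then 1 - (G.degree u : ℝ) / K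
      else 0)
    (Q : V → V → ℝ)
    (hQ : ∀ u v : V, Q u v = if G.Adj u v then 1 / (G.degree u : ℝ) else 0)
    (κ : V → V → ℝ)
    (hκ : ∀ a b : V, κ a b = min 1 ((G.degree a : ℝ) / (G.degree b : ℝ)))
    (T : Matrix (V × V) (V × V) ℝ)
    (hT : ∀ u₁ u₂ v₁ v₂ : V, T (u₁, u₂) (v₁, v₂) =
      P u₁ v₁ * Q u₂ v₂ * (1 - κ v₁ v₂) + P u₁ v₂ * Q u₂ v₁ * κ v₂ v₁) :
    ∀ (x : V × V) (v₁ v₂ : V),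
      Filter.Tendsto (fun t : ℕ => (T ^ t) x (v₁, v₂)) Filter.atTop
        (nhds ((1 / (Fintype.card V : ℝ)) *
          ((G.degree v₂ : ℝ) / ∑ w : V, (G.degree w : ℝ)))) := by
  obtain rfl : P = G.lazyWalkMatrix K := by ext u v; exact hP u v
  obtain rfl : Q = G.randomWalkMatrix := by ext u v; exact hQ u v
  obtain rfl : κ = G.swapProbability := by ext a b; exact hκ a b
  obtain rfl : T = coupledMatrix (G.lazyWalkMatrix K) G.randomWalkMatrix G.swapProbability := by
    ext ⟨u₁, u₂⟩ ⟨v₁, v₂⟩; exact hT u₁ u₂ v₁ v₂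
  have : Nonempty V := hconn.nonempty
  have hPs := G.lazyWalkMatrix_mem_rowStochastic hK hdegK
  have hQs := G.randomWalkMatrix_mem_rowStochastic hdeg
  have hD : 0 < ∑ w : V, (G.degree w : ℝ) :=
    sum_pos (fun w _ => by exact_mod_cast hdeg w) univ_nonempty
  have hμ : (fun _ : V => 1 / (Fintype.card V : ℝ)) ∈ stdSimplex ℝ V :=
    ⟨fun _ => by positivity, by simp⟩
  have hν : (fun v : V => (G.degree v : ℝ) / ∑ w : V, (G.degree w : ℝ)) ∈ stdSimplex ℝ V :=
    ⟨fun _ => by positivity, by rw [← sum_div, div_self hD.ne']⟩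
  have hprim := hconn.isPrimitive_coupledMatrix hnb hPs hQs G.swapProbability_mem_Icc
    (G.lazyWalkMatrix_pos hK) G.randomWalkMatrix_pos
    fun a b => G.swapProbability_pos (hdeg a) (hdeg b)
  intro x v₁ v₂
  exact hprim.tendsto_pow_apply
    (coupledMatrix_mem_rowStochastic hPs hQs G.swapProbability_mem_Icc)
    (mul_mem_stdSimplex_prod hμ hν) (G.vecMul_coupledMatrix_const_mul_degree hdeg _ _) x (v₁, v₂)

/-- Theorem 2, convergence: on a connected non-bipartite finite simple graph,
the Metropolis-coupled chain with transition matrix `T` has the same limiting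
distribution as the pair of independent chains: every entry of `T ^ t` in
column `(v₁, v₂)` converges to `(1/|V|) · (deg v₂ / ∑ deg)`. -/
theorem coupled_chain_limit
    {V : Type*} [Fintype V] [DecidableEq V] [Nonempty V]
    (G : SimpleGraph V) [DecidableRel G.Adj]
    (hconn : G.Connected) (hnb : ¬ G.Colorable 2)
    (hdeg : ∀ u : V, 1 ≤ G.degree u)
    (K : ℝ) (hK : 0 < K) (hdegK : ∀ u : V, (G.degree u : ℝ) ≤ K)
    (P : V → V → ℝ)
    (hP : ∀ u v : V, P u v =
      if G.Adj u v then 1 / K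
      else if u = v then 1 - (G.degree u : ℝ) / K
      else 0)
    (Q : V → V → ℝ)
    (hQ : ∀ u v : V, Q u v = if G.Adj u v then 1 / (G.degree u : ℝ) else 0)
    (κ : V → V → ℝ)
    (hκ : ∀ a b : V, κ a b = min 1 ((G.degree a : ℝ) / (G.degree b : ℝ)))
    (T : Matrix (V × V) (V × V) ℝ)
    (hT : ∀ u₁ u₂ v₁ v₂ : V, T (u₁, u₂) (v₁, v₂) =
      P u₁ v₁ * Q u₂ v₂ * (1 - κ v₁ v₂) + P u₁ v₂ * Q u₂ v₁ * κ v₂ v₁) :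
    ∀ (x : V × V) (v₁ v₂ : V),
      Filter.Tendsto (fun t : ℕ => (T ^ t) x (v₁, v₂)) Filter.atTop
        (nhds ((1 / (Fintype.card V : ℝ)) *
          ((G.degree v₂ : ℝ) / ∑ w : V, (G.degree w : ℝ)))) :=
  coupled_chain_limit_general G hconn hnb hdeg K hK hdegK P hP Q hQ κ hκ T hT
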